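/- arXiv:2601.01164 — 2 statements merged into one kernel-verified Lean document; each statement's English description precedes it below -/
import Mathlib

section
/- Let G be a finite simple graph without isolated vertices. Then q(G) ≤ max over vertices u of η(u), where η(u) = d(u) + (1/d(u))·Σ_{v ∈ N(u)} d(v). -/
open scoped Classical

namespace OuterplanarQ

/-- Signless Laplacian matrix Q(G) = D(G) + A(G). -/
noncomputable def qMatrix {V : Type*} [Fintype V] (G : SimpleGraph V) : Matrix V V ℝ :=
  fun i j => (if i = j then (G.degree i : ℝ) else 0) + (if G.Adj i j then 1 else 0)

/-- The Q-index: the largest eigenvalue of Q(G). -/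
noncomputable def qIndex {V : Type*} [Fintype V] (G : SimpleGraph V) : ℝ :=
  sSup {μ : ℝ | ∃ x : V → ℝ, x ≠ 0 ∧ (qMatrix G).mulVec x = μ • x}

/-- Outerplanar: one-page book embedding characterization, i.e. the vertices admit a
linear ordering (injection into ℝ) such that no two edges interleave. -/
def IsOuterplanar {V : Type*} (G : SimpleGraph V) : Prop :=
  ∃ f : V → ℝ, Function.Injective f ∧
    ∀ a b c d : V, G.Adj a b → G.Adj c d →
      ¬ (f a < f c ∧ f c < f b ∧ f b < f d)

/-- `G` contains a copy of `F` as a subgraph. -/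
def ContainsCopy {α β : Type*} (G : SimpleGraph α) (F : SimpleGraph β) : Prop :=
  ∃ f : β → α, Function.Injective f ∧ ∀ a b : β, F.Adj a b → G.Adj (f a) (f b)

/-- Disjoint union of `t` copies of the path on `k` vertices. -/
def pathUnion (t k : ℕ) : SimpleGraph (Fin t × Fin k) where
  Adj a b := a.1 = b.1 ∧ (SimpleGraph.pathGraph k).Adj a.2 b.2
  symm := ⟨fun _ _ h => ⟨h.1.symm, h.2.symm⟩⟩
  loopless := ⟨fun a h => (SimpleGraph.pathGraph k).loopless.irrefl a.2 h.2⟩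

/-- Disjoint union of two graphs. -/
def disjSum {α β : Type*} (G : SimpleGraph α) (H : SimpleGraph β) : SimpleGraph (α ⊕ β) where
  Adj a b := match a, b with
    | Sum.inl x, Sum.inl y => G.Adj x y
    | Sum.inr x, Sum.inr y => H.Adj x y
    | _, _ => False
  symm := ⟨by rintro (x|x) (y|y) h <;> simp_all <;> exact h.symm⟩
  loopless := ⟨by rintro (x|x) h <;> simp_all⟩

/-- The join `K₁ ∨ H` of a single vertex with `H`. -/
def cone {V : Type*} (H : SimpleGraph V) : SimpleGraph (Option V) where
  Adj a b := match a, b with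
    | none, none => False
    | none, some _ => True
    | some _, none => True
    | some x, some y => H.Adj x y
  symm := ⟨by rintro (_|x) (_|y) h <;> simp_all <;> exact h.symm⟩
  loopless := ⟨by rintro (_|x) h <;> simp_all⟩

/-- A disjoint union of paths: acyclic with maximum degree at most 2. -/
def IsLinearForest {V : Type*} [Fintype V] (G : SimpleGraph V) : Prop :=
  G.IsAcyclic ∧ ∀ v : V, G.degree v ≤ 2

/-- The closed neighbourhood `N[u]`. -/
def closedNbhd {V : Type*} (G : SimpleGraph V) (u : V) : Set V :=
  insert u (G.neighborSet u)

/-- The graph obtained from `G` by adding the edge `uv`. -/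
def addEdge {V : Type*} (G : SimpleGraph V) (u v : V) : SimpleGraph V :=
  G ⊔ SimpleGraph.fromEdgeSet {s(u, v)}

/-- The graph obtained from `G` by deleting the edge `uv`. -/
def delEdge {V : Type*} (G : SimpleGraph V) (u v : V) : SimpleGraph V :=
  G.deleteEdges {s(u, v)}

/-- η(u) = d(u) + (1/d(u)) · Σ_{v ∈ N(u)} d(v). -/
noncomputable def eta {V : Type*} [Fintype V] (G : SimpleGraph V) (u : V) : ℝ :=
  (G.degree u : ℝ) + (1 / (G.degree u : ℝ)) * ∑ v ∈ G.neighborFinset u, (G.degree v : ℝ)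

end OuterplanarQ

open scoped Matrix

/-- Rescale the eigenvector by `w` and look at a coordinate where the rescaled vector is largest
in absolute value: there the eigen-equation is dominated by the `w`-weighted row sum. -/
theorem Matrix.exists_abs_eigenvalue_mul_le_mulVec {n : Type*} [Fintype n]
    {A : Matrix n n ℝ} (hA : ∀ i j, 0 ≤ A i j) {w : n → ℝ} (hw : ∀ i, 0 < w i)
    {μ : ℝ} {x : n → ℝ} (hx : x ≠ 0) (hμ : A *ᵥ x = μ • x) :
    ∃ i, |μ| * w i ≤ (A *ᵥ w) i := by
  obtain ⟨j₀, hj₀⟩ := Function.ne_iff.mp hx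
  have : Nonempty n := ⟨j₀⟩
  obtain ⟨i, hi⟩ := Finite.exists_max fun j => |x j / w j|
  have hxw : ∀ j, |x j| ≤ w j * |x i / w i| := fun j => by
    have := hi j
    rwa [abs_div, abs_of_pos (hw j), div_le_iff₀ (hw j), mul_comm] at this
  have hpos : 0 < |x i / w i| :=
    (abs_pos.mpr (div_ne_zero hj₀ (hw j₀).ne')).trans_le (hi j₀)
  refine ⟨i, le_of_mul_le_mul_right ?_ hpos⟩
  calc |μ| * w i * |x i / w i| = |(A *ᵥ x) i| := by
        rw [hμ, Pi.smul_apply, smul_eq_mul, abs_mul, abs_div, abs_of_pos (hw i), mul_assoc,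
          mul_div_cancel₀ _ (hw i).ne']
    _ ≤ ∑ j, A i j * |x j| := by
        simp only [Matrix.mulVec, dotProduct]
        refine (Finset.abs_sum_le_sum_abs _ _).trans_eq ?_
        simp only [abs_mul, abs_of_nonneg (hA _ _)]
    _ ≤ ∑ j, A i j * (w j * |x i / w i|) :=
        Finset.sum_le_sum fun j _ => mul_le_mul_of_nonneg_left (hxw j) (hA i j)
    _ = (A *ᵥ w) i * |x i / w i| := by
        simp only [Matrix.mulVec, dotProduct, Finset.sum_mul, mul_assoc]

namespace OuterplanarQ

section

variable {V : Type*} [Fintype V] (G : SimpleGraph V)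

theorem qMatrix_nonneg (i j : V) : 0 ≤ qMatrix G i j := by
  unfold qMatrix
  positivity

theorem qMatrix_mulVec_degree (u : V) :
    (qMatrix G *ᵥ fun v => (G.degree v : ℝ)) u
      = G.degree u * G.degree u + ∑ v ∈ G.neighborFinset u, (G.degree v : ℝ) := by
  simp only [qMatrix, Matrix.mulVec, dotProduct, add_mul, ite_mul, zero_mul, one_mul,
    Finset.sum_add_distrib, Finset.sum_ite_eq, Finset.mem_univ, if_true,
    SimpleGraph.neighborFinset_eq_filter, Finset.sum_filter]

theorem degree_mul_eta {u : V} (hu : 0 < G.degree u) :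
    G.degree u * eta G u = (qMatrix G *ᵥ fun v => (G.degree v : ℝ)) u := by
  have : (G.degree u : ℝ) ≠ 0 := by positivity
  rw [qMatrix_mulVec_degree, eta]
  field_simp

theorem eta_nonneg (u : V) : 0 ≤ eta G u := by
  unfold eta
  positivity

theorem exists_eigenvalue_le_eta (hiso : ∀ v : V, 0 < G.degree v) {μ : ℝ} {x : V → ℝ}
    (hx : x ≠ 0) (hμ : qMatrix G *ᵥ x = μ • x) : ∃ u, μ ≤ eta G u := by
  have hd : ∀ v, (0 : ℝ) < G.degree v := fun v => Nat.cast_pos.mpr (hiso v)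
  obtain ⟨u, hu⟩ := Matrix.exists_abs_eigenvalue_mul_le_mulVec (qMatrix_nonneg G) hd hx hμ
  refine ⟨u, (le_abs_self μ).trans (le_of_mul_le_mul_right ?_ (hd u))⟩
  rwa [mul_comm (eta G u), degree_mul_eta G (hiso u)]

end

/-- For a graph without isolated vertices, the `Q`-index is at most the maximum of
`η(u) = d(u) + (1/d(u)) Σ_{v ∈ N(u)} d(v)` over all vertices `u`. -/
theorem qIndex_le_max_eta
    {V : Type*} [Fintype V] [Nonempty V] (G : SimpleGraph V)
    (hiso : ∀ v : V, 0 < G.degree v) :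
    ∃ u : V, qIndex G ≤ eta G u := by
  obtain ⟨u₀, hu₀⟩ := Finite.exists_max (eta G)
  -- `sSup` of an empty or unbounded set of reals is `0`, hence the side condition `0 ≤ eta G u₀`.
  refine ⟨u₀, Real.sSup_le ?_ (eta_nonneg G u₀)⟩
  rintro μ ⟨x, hx, hμ⟩
  obtain ⟨u, hu⟩ := exists_eigenvalue_le_eta G hiso hx hμ
  exact hu.trans (hu₀ u)

end OuterplanarQ
end

section
/- Let G be a connected finite simple graph of order n ≥ 5 with a vertex u of degree n − 1 such that every vertex v ≠ u has degree d(v) ≤ 3. Let q = q(G) and let x be a positive eigenvector of Q(G) corresponding to the eigenvalue q, normalized so that x_u = 1. Then for every vertex v ≠ u, 1/q < x_v < 1/q + 30/q². -/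
open scoped Classical

namespace OuterplanarQ

/-!
Evaluate the eigen-equation `q x_v = d(v) x_v + Σ_{w ~ v} x_w` with `x_u = 1`. At a vertex `v ≠ u`
the term `x_u = 1` gives `q x_v > 1`. At `u` it gives `q = (n - 1) + Σ_{w ≠ u} x_w`, which bounds the
sum over the neighbours of `v` other than `u` by `q - (n - 1) - x_v` and forces `x_v < 1`; at a vertex
`m ≠ u` maximising `x` it gives `(q - 5) x_m ≤ 1`. Then `x_v < 1` settles `q ≤ 6` and
`(q - 5) x_v ≤ 1` settles `q > 6`.
-/

open Finset Matrix

lemma qMatrix_mulVec_apply {V : Type*} [Fintype V] (G : SimpleGraph V) (x : V → ℝ) (i : V) :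
    (qMatrix G *ᵥ x) i = G.degree i * x i + ∑ j ∈ G.neighborFinset i, x j := by
  simp only [Matrix.mulVec, dotProduct, qMatrix, add_mul, ite_mul, zero_mul, one_mul,
    sum_add_distrib, sum_ite_eq, mem_univ, if_true]
  rw [SimpleGraph.neighborFinset_eq_filter, sum_filter]

lemma lt_one_div_add_thirty_div_sq {q y : ℝ} (hq : 0 < q) (hy : y < 1)
    (hqy : (q - 5) * y ≤ 1) : y < 1 / q + 30 / q ^ 2 := by
  rw [div_add_div _ _ hq.ne' (by positivity), lt_div_iff₀ (by positivity)]
  rcases le_or_gt q 6 with hq6 | hq6 <;> nlinarith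

lemma sum_neighborFinset_erase_le {V : Type*} [Fintype V] (G : SimpleGraph V) {x : V → ℝ}
    (hx : ∀ i, 0 ≤ x i) {u v : V} (hv : v ≠ u) :
    ∑ j ∈ (G.neighborFinset v).erase u, x j ≤ ∑ w ∈ univ.erase u, x w - x v := by
  rw [← sum_erase_eq_sub (mem_erase.2 ⟨hv, mem_univ v⟩)]
  refine sum_le_sum_of_subset_of_nonneg (fun j hj => ?_) fun j _ _ => hx j
  obtain ⟨hju, hjv⟩ := mem_erase.1 hj
  exact mem_erase.2 ⟨((G.mem_neighborFinset v j).1 hjv).ne', mem_erase.2 ⟨hju, mem_univ j⟩⟩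

section UniversalVertex

variable {V : Type*} [Fintype V] {G : SimpleGraph V} {u : V} {q : ℝ} {x : V → ℝ}

lemma eigenvalue_eq_degree_add_sum (hu : G.IsUniversal u) (heig : qMatrix G *ᵥ x = q • x)
    (hxu : x u = 1) : q = G.degree u + ∑ v ∈ univ.erase u, x v := by
  have h := congrFun heig u
  rw [qMatrix_mulVec_apply, (G.neighborFinset_eq_erase_univ u).2 hu, Pi.smul_apply, hxu] at h
  simpa using h.symm

lemma eigenvalue_mul_apply_of_ne (hu : G.IsUniversal u) (heig : qMatrix G *ᵥ x = q • x)
    (hxu : x u = 1) {v : V} (hv : v ≠ u) :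
    q * x v = G.degree v * x v + 1 + ∑ j ∈ (G.neighborFinset v).erase u, x j := by
  have h := congrFun heig v
  rw [qMatrix_mulVec_apply, ← add_sum_erase _ x ((G.mem_neighborFinset v u).2 (hu hv.symm).symm),
    hxu] at h
  simp only [Pi.smul_apply, smul_eq_mul] at h
  linarith

lemma one_lt_eigenvalue_mul_apply (hu : G.IsUniversal u) (heig : qMatrix G *ᵥ x = q • x)
    (hxu : x u = 1) (hx : ∀ i, 0 ≤ x i) {v : V} (hv : v ≠ u) (hxv : 0 < x v) :
    1 < q * x v := by
  have hdeg : (0 : ℝ) < G.degree v :=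
    Nat.cast_pos.2 (G.degree_pos_iff_exists_adj v |>.2 ⟨u, (hu hv.symm).symm⟩)
  have hrest : 0 ≤ ∑ j ∈ (G.neighborFinset v).erase u, x j :=
    sum_nonneg fun j _ => hx j
  rw [eigenvalue_mul_apply_of_ne hu heig hxu hv]
  nlinarith

lemma apply_lt_one (hu : G.IsUniversal u) (heig : qMatrix G *ᵥ x = q • x) (hxu : x u = 1)
    (hx : ∀ i, 0 ≤ x i) (hdu : 4 ≤ G.degree u) {v : V} (hv : v ≠ u) (hdv : G.degree v ≤ 3) :
    x v < 1 := by
  set S := ∑ w ∈ univ.erase u, x w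
  have hq : q = G.degree u + S := eigenvalue_eq_degree_add_sum hu heig hxu
  have hrest := sum_neighborFinset_erase_le G hx hv
  have hS : 0 ≤ S := sum_nonneg fun w _ => hx w
  have hdu' : (4 : ℝ) ≤ G.degree u := by exact_mod_cast hdu
  have hdv' : (G.degree v : ℝ) ≤ 3 := by exact_mod_cast hdv
  have h := eigenvalue_mul_apply_of_ne hu heig hxu hv
  have hkey : (q - 2) * x v ≤ q - 3 := by nlinarith [hx v]
  nlinarith

lemma sum_neighbors_erase_le_two_mul (hu : G.IsUniversal u) {m : V} (hm : m ≠ u)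
    (hdm : G.degree m ≤ 3) (hxm : 0 ≤ x m) (hmax : ∀ j ≠ u, x j ≤ x m) :
    ∑ j ∈ (G.neighborFinset m).erase u, x j ≤ 2 * x m := by
  have hcard : #((G.neighborFinset m).erase u) ≤ 2 := by
    rw [card_erase_of_mem ((G.mem_neighborFinset m u).2 (hu hm.symm).symm),
      G.card_neighborFinset_eq_degree]
    omega
  calc ∑ j ∈ (G.neighborFinset m).erase u, x j
      ≤ #((G.neighborFinset m).erase u) • x m :=
        sum_le_card_nsmul _ _ _ fun j hj => hmax j (mem_erase.1 hj).1
    _ ≤ 2 * x m := by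
        rw [nsmul_eq_mul]
        exact mul_le_mul_of_nonneg_right (by exact_mod_cast hcard) hxm

lemma sub_five_mul_apply_le_one (hu : G.IsUniversal u) (heig : qMatrix G *ᵥ x = q • x)
    (hxu : x u = 1) (hx : ∀ i, 0 ≤ x i) (hd : ∀ v, v ≠ u → G.degree v ≤ 3) {v : V}
    (hv : v ≠ u) : (q - 5) * x v ≤ 1 := by
  obtain ⟨m, hm, hmax⟩ := exists_max_image (univ.erase u) x ⟨v, mem_erase.2 ⟨hv, mem_univ v⟩⟩
  have hmu : m ≠ u := (mem_erase.1 hm).1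
  have hmax' : ∀ j ≠ u, x j ≤ x m := fun j hj => hmax j (mem_erase.2 ⟨hj, mem_univ j⟩)
  have hrest := sum_neighbors_erase_le_two_mul hu hmu (hd m hmu) (hx m) hmax'
  have hdm : (G.degree m : ℝ) ≤ 3 := by exact_mod_cast hd m hmu
  have hm5 : (q - 5) * x m ≤ 1 := by
    nlinarith [eigenvalue_mul_apply_of_ne hu heig hxu hmu, hx m]
  rcases le_or_gt q 5 with hq5 | hq5
  · nlinarith [hx v]
  · calc (q - 5) * x v ≤ (q - 5) * x m := by gcongr; exact hmax' v hv
      _ ≤ 1 := hm5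

end UniversalVertex

theorem perron_entry_bounds_general
    {V : Type*} [Fintype V] {n : ℕ} (hn : 5 ≤ n)
    (G : SimpleGraph V) (hcard : Fintype.card V = n)
    (u : V) (hdu : G.degree u = n - 1) (hd : ∀ v : V, v ≠ u → G.degree v ≤ 3)
    (x : V → ℝ) (hpos : ∀ i : V, 0 < x i)
    (heig : (qMatrix G).mulVec x = qIndex G • x) (hxu : x u = 1) :
    ∀ v : V, v ≠ u → 1 / qIndex G < x v ∧ x v < 1 / qIndex G + 30 / (qIndex G) ^ 2 := by
  intro v hv
  have hu : G.IsUniversal u := (G.degree_eq_card_sub_one u).1 (hcard ▸ hdu)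
  have hx : ∀ i, 0 ≤ x i := fun i => (hpos i).le
  have hlow := one_lt_eigenvalue_mul_apply hu heig hxu hx hv (hpos v)
  have hq : 0 < qIndex G := pos_of_mul_pos_left (one_pos.trans hlow) (hx v)
  refine ⟨(div_lt_iff₀ hq).2 (by linarith), lt_one_div_add_thirty_div_sq hq ?_ ?_⟩
  · exact apply_lt_one hu heig hxu hx (by omega) hv (hd v hv)
  · exact sub_five_mul_apply_le_one hu heig hxu hx hd hv

/-- Claim 3.4 of the paper: eigenvector entry estimates. If `u` has degree `n - 1`,
every other vertex has degree at most 3, and `x` is a positive eigenvector of `Q(G)`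
for the eigenvalue `q = q(G)` normalized by `x_u = 1`, then `1/q < x_v < 1/q + 30/q²`
for every `v ≠ u`. -/
theorem perron_entry_bounds
    {V : Type*} [Fintype V] {n : ℕ} (hn : 5 ≤ n)
    (G : SimpleGraph V) (hcard : Fintype.card V = n) (hconn : G.Connected)
    (u : V) (hdu : G.degree u = n - 1) (hd : ∀ v : V, v ≠ u → G.degree v ≤ 3)
    (x : V → ℝ) (hpos : ∀ i : V, 0 < x i)
    (heig : (qMatrix G).mulVec x = qIndex G • x) (hxu : x u = 1) :
    ∀ v : V, v ≠ u → 1 / qIndex G < x v ∧ x v < 1 / qIndex G + 30 / (qIndex G) ^ 2 :=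
  perron_entry_bounds_general hn G hcard u hdu hd x hpos heig hxu
end OuterplanarQ
end
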